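/- arXiv:1811.06860 — 2 statements merged into one kernel-verified Lean document; each statement's English description precedes it below -/
import Mathlib

section
/- (Friedberg splitting) Every computably enumerable non-computable set A ⊆ ℕ can be represented as the union of two disjoint computably enumerable non-computable sets: there exist c.e. sets A₀, A₁ with A₀ ∩ A₁ = ∅, A₀ ∪ A₁ = A, and neither A₀ nor A₁ computable. -/
/-- Partial functions `ℕ →. ℕ` computable relative to an oracle `O : ℕ →. ℕ`
(the oracle analogue of `Nat.Partrec`). -/
inductive RecursiveInOracle (O : ℕ →. ℕ) : (ℕ →. ℕ) → Prop
  | oracle : RecursiveInOracle O O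
  | zero : RecursiveInOracle O (pure 0)
  | succ : RecursiveInOracle O ↑Nat.succ
  | left : RecursiveInOracle O ↑fun n : ℕ => n.unpair.1
  | right : RecursiveInOracle O ↑fun n : ℕ => n.unpair.2
  | pair {f g : ℕ →. ℕ} : RecursiveInOracle O f → RecursiveInOracle O g →
      RecursiveInOracle O fun n => Nat.pair <$> f n <*> g n
  | comp {f g : ℕ →. ℕ} : RecursiveInOracle O f → RecursiveInOracle O g →
      RecursiveInOracle O fun n => g n >>= f
  | prec {f g : ℕ →. ℕ} : RecursiveInOracle O f → RecursiveInOracle O g →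
      RecursiveInOracle O (Nat.unpaired fun a n =>
        n.rec (f a) fun y IH => do let i ← IH; g (Nat.pair a (Nat.pair y i)))
  | rfind {f : ℕ →. ℕ} : RecursiveInOracle O f →
      RecursiveInOracle O fun a => Nat.rfind fun n => (fun m => m = 0) <$> f (Nat.pair a n)

open Classical in
/-- The characteristic function of a set of naturals, as a partial function. -/
noncomputable def Set.chi (A : Set ℕ) : ℕ →. ℕ :=
  fun n => Part.some (if n ∈ A then 1 else 0)

/-- Turing reducibility for sets of naturals. -/
def TRed (A B : Set ℕ) : Prop := RecursiveInOracle B.chi A.chi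

/-- Turing incomparability. -/
def TIncomp (A B : Set ℕ) : Prop := ¬ TRed A B ∧ ¬ TRed B A

/-- A set is computably enumerable if it is the domain of a partial computable function. -/
def CE (A : Set ℕ) : Prop := ∃ f : ℕ →. ℕ, Partrec f ∧ ∀ n, n ∈ A ↔ (f n).Dom

/-- Two sets are recursively inseparable if no computable set separates them. -/
def RecInsep (A B : Set ℕ) : Prop :=
  ¬ ∃ D : Set ℕ, ComputablePred (· ∈ D) ∧ A ⊆ D ∧ B ∩ D = ∅

/-- `D` is a separator for the pair `⟨A, B⟩`. -/
def Separator (A B D : Set ℕ) : Prop := A ⊆ D ∧ B ∩ D = ∅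

/-- The halting problem `∅′`. -/
def haltingSet : Set ℕ :=
  {e | ((Denumerable.ofNat Nat.Partrec.Code e).eval e).Dom}

/-!
Friedberg's construction. Enumerate `A = dom (eval c)` and place each newly enumerated element
into one of two halves. Requirement `n`, with `n.div2` coding `e` and `n.bodd = i`, asks that
`W_e` not be the complement of half `i`; the unsatisfied requirement of highest priority that sees
the new element in `W_e` puts it into half `i`, and is then satisfied forever. If half `i` were
computable, its complement would be some `W_e`, and the corresponding requirement could never act.
Since the finitely many requirements of higher priority act at most once each, from some stage on
no newly enumerated element lies in `W_e`. So `a ∉ A` iff `a` appears in `W_e` after that stage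
and before `a` is enumerated, which makes the complement of `A` c.e. and `A` computable.
-/

open Nat.Partrec (Code)
open Nat.Partrec.Code

namespace Nat.Partrec.Code

theorem isSome_evaln_mono {c : Code} {a k₁ k₂ : ℕ} (hk : k₁ ≤ k₂)
    (h : (evaln k₁ c a).isSome) : (evaln k₂ c a).isSome := by
  obtain ⟨x, hx⟩ := Option.isSome_iff_exists.1 h
  exact Option.isSome_iff_exists.2 ⟨x, evaln_mono hk hx⟩

theorem dom_iff_exists_isSome_evaln {c : Code} {a : ℕ} :
    (eval c a).Dom ↔ ∃ k, (evaln k c a).isSome := by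
  simp only [Part.dom_iff_mem, evaln_complete, Option.isSome_iff_exists]
  exact ⟨fun ⟨x, k, h⟩ => ⟨k, x, h⟩, fun ⟨k, x, h⟩ => ⟨x, k, h⟩⟩

end Nat.Partrec.Code

theorem PrimrecRel.rePred_exists {α : Type*} [Primcodable α] {p : α → ℕ → Prop}
    (hp : PrimrecRel p) : REPred fun a => ∃ n, p a n := by
  classical
  have hsearch : Partrec fun a => Nat.rfind fun n => Part.some (decide (p a n)) :=
    Partrec.rfind hp.decide.to_comp.partrec₂
  exact hsearch.dom_re.of_eq fun a => Nat.rfind_dom.trans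
    ⟨fun ⟨n, hn, _⟩ => ⟨n, of_decide_eq_true (Part.mem_some_iff.1 hn).symm⟩,
      fun ⟨n, hn⟩ => ⟨n, Part.mem_some_iff.2 (decide_eq_true hn).symm, fun _ => trivial⟩⟩

theorem REPred.ce {A : Set ℕ} (hA : REPred (· ∈ A)) : CE A :=
  ⟨_, hA.map (Computable.const 0).to₂, fun _ => ⟨fun h => ⟨h, trivial⟩, fun ⟨h, _⟩ => h⟩⟩

theorem CE.exists_code {A : Set ℕ} (hA : CE A) : ∃ e : Code, ∀ a, a ∈ A ↔ (eval e a).Dom := by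
  obtain ⟨f, hf, hfA⟩ := hA
  obtain ⟨e, rfl⟩ := Nat.Partrec.Code.exists_code.1 (Partrec.nat_iff.1 hf)
  exact ⟨e, hfA⟩

namespace FriedbergSplitting

variable (c : Code)

def enum (k : ℕ) : Option ℕ :=
  (evaln k.unpair.1 c k.unpair.2).map fun _ => k.unpair.2

def EnumFirst (k a : ℕ) : Prop :=
  enum c k = some a ∧ ∀ j < k, enum c j ≠ some a

instance : DecidableRel (EnumFirst c) := fun _ _ => inferInstanceAs (Decidable (_ ∧ _))

def reqCode (n : ℕ) : Code := Denumerable.ofNat Code n.div2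

def Ready (l : List ℕ) (k a n : ℕ) : Prop :=
  n ∉ l ∧ (evaln k (reqCode n) a).isSome

instance (l : List ℕ) (k a : ℕ) : DecidablePred (Ready l k a) :=
  fun _ => inferInstanceAs (Decidable (_ ∧ _))

-- Only requirements `n < k` compete at stage `k`, which keeps the search bounded.
def chosen (l : List ℕ) (k : ℕ) : Option ℕ :=
  (enum c k).bind fun a =>
    if EnumFirst c k a then (List.range k).find? fun n => Ready l k a n else none

def satisfied : ℕ → List ℕ
  | 0 => []
  | k + 1 => (chosen c (satisfied k) k).toList ++ satisfied k

def action (k : ℕ) : Option ℕ := chosen c (satisfied c k) k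

def side (k : ℕ) : Bool := (action c k).elim false fun n => n.bodd

def half (i : Bool) : Set ℕ := {a | ∃ k, EnumFirst c k a ∧ side c k = i}

variable {c}

theorem enum_eq_some {k a : ℕ} :
    enum c k = some a ↔ k.unpair.2 = a ∧ (evaln k.unpair.1 c a).isSome := by
  unfold enum
  constructor
  · intro h
    obtain ⟨x, hx, rfl⟩ := Option.map_eq_some_iff.1 h
    simp [hx]
  · rintro ⟨rfl, h⟩
    obtain ⟨x, hx⟩ := Option.isSome_iff_exists.1 h
    simp [hx]

theorem exists_enum_eq_some_iff {a : ℕ} : (∃ k, enum c k = some a) ↔ (eval c a).Dom := by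
  simp only [enum_eq_some, dom_iff_exists_isSome_evaln]
  constructor
  · rintro ⟨k, rfl, h⟩
    exact ⟨_, h⟩
  · rintro ⟨s, h⟩
    exact ⟨Nat.pair s a, by simpa using h⟩

theorem EnumFirst.dom {k a : ℕ} (h : EnumFirst c k a) : (eval c a).Dom :=
  exists_enum_eq_some_iff.1 ⟨k, h.1⟩

theorem exists_enumFirst {a : ℕ} (h : (eval c a).Dom) : ∃ k, EnumFirst c k a := by
  classical
  have hex := exists_enum_eq_some_iff.2 h
  exact ⟨Nat.find hex, Nat.find_spec hex, fun j hj => Nat.find_min hex hj⟩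

theorem EnumFirst.stage_unique {k k' a : ℕ} (h : EnumFirst c k a) (h' : EnumFirst c k' a) :
    k = k' := by
  by_contra hne
  rcases Nat.lt_or_gt_of_ne hne with hlt | hlt
  · exact h'.2 k hlt h.1
  · exact h.2 k' hlt h'.1

theorem half_disjoint : half c false ∩ half c true = ∅ := by
  ext a
  simp only [half, Set.mem_inter_iff, Set.mem_ofPred_eq, Set.mem_empty_iff_false, iff_false]
  rintro ⟨⟨k, hk, hfalse⟩, ⟨k', hk', htrue⟩⟩
  rw [hk.stage_unique hk', htrue] at hfalse
  exact Bool.noConfusion hfalse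

theorem half_union : half c false ∪ half c true = {a | (eval c a).Dom} := by
  ext a
  simp only [half, Set.mem_union, Set.mem_ofPred_eq]
  constructor
  · rintro (⟨k, hk, -⟩ | ⟨k, hk, -⟩) <;> exact hk.dom
  · intro h
    obtain ⟨k, hk⟩ := exists_enumFirst h
    cases hs : side c k
    · exact Or.inl ⟨k, hk, hs⟩
    · exact Or.inr ⟨k, hk, hs⟩

theorem mem_satisfied {k n : ℕ} : n ∈ satisfied c k ↔ ∃ j < k, action c j = some n := by
  induction k with
  | zero => simp [satisfied]
  | succ k ih =>
    simp only [satisfied, List.mem_append, Option.mem_toList, ih, Nat.lt_succ_iff_lt_or_eq,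
      or_and_right, exists_or, exists_eq_left, action]
    exact or_comm.trans (by rw [eq_comm])

theorem chosen_eq_some {l : List ℕ} {k n : ℕ} (h : chosen c l k = some n) :
    ∃ a, EnumFirst c k a ∧ Ready l k a n := by
  unfold chosen at h
  obtain ⟨a, -, ha⟩ := Option.bind_eq_some_iff.1 h
  split_ifs at ha with hfirst
  exact ⟨a, hfirst, by simpa using (List.find?_range_eq_some.1 ha).1⟩

theorem chosen_le_of_ready {l : List ℕ} {k a m : ℕ} (hfirst : EnumFirst c k a) (hm : m < k)
    (hready : Ready l k a m) : ∃ n ≤ m, chosen c l k = some n := by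
  have hfind : ((List.range k).find? fun n => Ready l k a n).isSome :=
    List.find?_isSome.2 ⟨m, List.mem_range.2 hm, decide_eq_true hready⟩
  obtain ⟨n, hn⟩ := Option.isSome_iff_exists.1 hfind
  refine ⟨n, ?_, by simp [chosen, hfirst.1, hfirst, hn]⟩
  by_contra! hlt
  simpa [hready] using (List.find?_range_eq_some.1 hn).2.2 m hlt

theorem action_injective {j j' n : ℕ} (h : action c j = some n) (h' : action c j' = some n) :
    j = j' := by
  have not_mem {k} (hk : action c k = some n) : n ∉ satisfied c k := by
    obtain ⟨a, -, hready⟩ := chosen_eq_some hk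
    exact hready.1
  by_contra hne
  rcases Nat.lt_or_gt_of_ne hne with hlt | hlt
  · exact not_mem h' (mem_satisfied.2 ⟨j, hlt, h⟩)
  · exact not_mem h (mem_satisfied.2 ⟨j', hlt, h'⟩)

theorem exists_bound_action (N : ℕ) : ∃ s, ∀ n < N, ∀ j, action c j = some n → j < s := by
  have hfin : (⋃ n ∈ Set.Iio N, {j | action c j = some n}).Finite :=
    (Set.finite_Iio N).biUnion fun n _ =>
      Set.Subsingleton.finite fun _ hj _ hj' => action_injective hj hj'
  obtain ⟨s, hs⟩ := hfin.bddAbove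
  exact ⟨s + 1, fun n hn j hj => Nat.lt_succ_of_le (hs (Set.mem_biUnion hn hj))⟩

section Computability

open Primrec

variable (c)

theorem primrec_enum : Primrec (enum c) :=
  option_map (primrec_evaln.comp (((fst.comp unpair).pair (const c)).pair (snd.comp unpair)))
    ((snd.comp unpair).comp fst).to₂

theorem primrecRel_enum_eq_some : PrimrecRel fun k a => enum c k = some a :=
  Primrec.eq.comp₂ ((primrec_enum c).comp₂ .left) (option_some.comp₂ .right)

theorem primrecRel_forall_lt_enum_ne : PrimrecRel fun k a => ∀ j < k, enum c j ≠ some a :=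
  (primrecRel_enum_eq_some c).not.forall_lt

theorem primrecRel_enumFirst : PrimrecRel (EnumFirst c) :=
  (primrecRel_enum_eq_some c).and (primrecRel_forall_lt_enum_ne c)

theorem primrecRel_ready :
    PrimrecRel fun (n : ℕ) (q : (List ℕ × ℕ) × ℕ) => Ready q.1.1 q.1.2 q.2 n := by
  have hmem : PrimrecRel fun (l : List ℕ) (n : ℕ) => n ∈ l :=
    (PrimrecRel.exists_mem_list Primrec.eq).of_eq fun l n => by simp
  have hhalts : Primrec fun p : ℕ × (List ℕ × ℕ) × ℕ =>
      (evaln p.2.1.2 (reqCode p.1) p.2.2).isSome :=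
    option_isSome.comp (primrec_evaln.comp
      (((snd.comp (fst.comp snd)).pair ((Primrec.ofNat Code).comp (nat_div2.comp fst))).pair
        (snd.comp snd)))
  exact (hmem.comp (fst.comp (fst.comp snd)) fst).not.and (Primrec.eq.comp hhalts (const true))

theorem primrec_chosen : Primrec₂ (chosen c) := by
  have hfind : Primrec fun q : (List ℕ × ℕ) × ℕ =>
      (List.range q.1.2).find? fun n => Ready q.1.1 q.1.2 q.2 n :=
    (list_head?.comp ((PrimrecRel.listFilter primrecRel_ready).comp
      (list_range.comp (snd.comp fst)) .id)).of_eq fun q => by simp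
  exact option_bind ((primrec_enum c).comp snd)
    (Primrec.ite ((primrecRel_enumFirst c).comp (snd.comp fst) snd) hfind (const none)).to₂

theorem primrec_satisfied : Primrec (satisfied c) := by
  have hstep : Primrec₂ fun (k : ℕ) (l : List ℕ) => (chosen c l k).toList ++ l :=
    list_append.comp₂ (optionToList.comp₂ ((primrec_chosen c).comp₂ .right .left)) .right
  refine (nat_rec₁ [] hstep).of_eq fun k => ?_
  induction k with
  | zero => rfl
  | succ k ih => simp [satisfied, ← ih]

theorem primrec_side : Primrec (side c) :=
  (option_casesOn ((primrec_chosen c).comp (primrec_satisfied c) .id) (const false)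
    (nat_bodd.comp snd).to₂).of_eq fun k => by
    simp only [side, action, id]
    cases chosen c (satisfied c k) k <;> rfl

theorem rePred_mem_half (i : Bool) : REPred (· ∈ half c i) :=
  PrimrecRel.rePred_exists (p := fun a k => EnumFirst c k a ∧ side c k = i)
    ((primrecRel_enumFirst c).swap.and (Primrec.eq.comp ((primrec_side c).comp snd) (const i)))

end Computability

section Requirement

variable {c e : Code} {i : Bool}

theorem reqCode_bit (i : Bool) (e : Code) : reqCode (Nat.bit i (Encodable.encode e)) = e := by
  rw [reqCode, Nat.div2_bit, Denumerable.ofNat_encode]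

theorem action_ne_some_bit (he : ∀ a, (eval e a).Dom ↔ a ∉ half c i) (j : ℕ) :
    action c j ≠ some (Nat.bit i (Encodable.encode e)) := by
  intro hj
  obtain ⟨a, hfirst, -, hhalts⟩ := chosen_eq_some hj
  have hside : side c j = i := by simp [side, hj, Nat.bodd_bit]
  rw [reqCode_bit] at hhalts
  exact (he a).1 (dom_iff_exists_isSome_evaln.2 ⟨j, hhalts⟩) ⟨j, hfirst, hside⟩

theorem exists_stage_not_isSome_evaln (he : ∀ a, (eval e a).Dom ↔ a ∉ half c i) :
    ∃ K, ∀ j a, K ≤ j → EnumFirst c j a → ¬ (evaln j e a).isSome := by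
  set N := Nat.bit i (Encodable.encode e)
  obtain ⟨s, hs⟩ := exists_bound_action (c := c) N
  refine ⟨max s (N + 1), fun j a hj hfirst hhalts => ?_⟩
  have hunsat : N ∉ satisfied c j := fun hmem => by
    obtain ⟨j', -, hj'⟩ := mem_satisfied.1 hmem
    exact action_ne_some_bit he j' hj'
  obtain ⟨n, hnN, hn⟩ :=
    chosen_le_of_ready hfirst (by omega) ⟨hunsat, by rwa [reqCode_bit]⟩
  rcases hnN.lt_or_eq with hlt | rfl
  · exact absurd (hs n hlt j hn) (by omega)
  · exact action_ne_some_bit he j hn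

theorem rePred_not_dom (he : ∀ a, (eval e a).Dom ↔ a ∉ half c i) :
    REPred fun a => ¬ (eval c a).Dom := by
  obtain ⟨K, hK⟩ := exists_stage_not_isSome_evaln he
  have hprim : PrimrecRel fun a t => (∀ j < K + t, enum c j ≠ some a) ∧
      (evaln (K + t) e a).isSome :=
    have hstage : Primrec fun p : ℕ × ℕ => K + p.2 := Primrec.nat_add.comp (.const K) .snd
    ((primrecRel_forall_lt_enum_ne c).comp hstage .fst).and <| Primrec.eq.comp
      (Primrec.option_isSome.comp (primrec_evaln.comp ((hstage.pair (.const e)).pair .fst)))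
      (.const true)
  refine (PrimrecRel.rePred_exists hprim).of_eq fun a => ⟨?_, fun hndom => ?_⟩
  · rintro ⟨t, hnew, hhalts⟩ hdom
    obtain ⟨k, hfirst⟩ := exists_enumFirst hdom
    have hk : K + t ≤ k := by
      by_contra! hlt
      exact hnew k hlt hfirst.1
    exact hK k a (by omega) hfirst (isSome_evaln_mono hk hhalts)
  · have hnot_half : a ∉ half c i := fun ⟨k, hfirst, _⟩ => hndom hfirst.dom
    obtain ⟨t, ht⟩ := dom_iff_exists_isSome_evaln.1 ((he a).2 hnot_half)
    exact ⟨t, fun j _ hj => hndom (exists_enum_eq_some_iff.1 ⟨j, hj⟩),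
      isSome_evaln_mono (by omega) ht⟩

theorem computablePred_dom_of_computablePred_half (h : ComputablePred (· ∈ half c i)) :
    ComputablePred fun a => (eval c a).Dom := by
  obtain ⟨e, he⟩ := (REPred.ce (A := (half c i)ᶜ) h.not.to_re).exists_code
  exact ComputablePred.computable_iff_re_compl_re'.2
    ⟨(eval_part.comp (.const c) .id).dom_re, rePred_not_dom fun a => (he a).symm⟩

end Requirement

end FriedbergSplitting

theorem stmt12 (A : Set ℕ) (hA : CE A) (hA' : ¬ ComputablePred (· ∈ A)) :
    ∃ A₀ A₁ : Set ℕ, CE A₀ ∧ CE A₁ ∧ A₀ ∩ A₁ = ∅ ∧ A₀ ∪ A₁ = A ∧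
      ¬ ComputablePred (· ∈ A₀) ∧ ¬ ComputablePred (· ∈ A₁) := by
  obtain ⟨c, hc⟩ := hA.exists_code
  obtain rfl : A = {a | (eval c a).Dom} := Set.ext hc
  open FriedbergSplitting in
  exact ⟨half c false, half c true, (rePred_mem_half c false).ce, (rePred_mem_half c true).ce,
    half_disjoint, half_union, fun h => hA' (computablePred_dom_of_computablePred_half h),
    fun h => hA' (computablePred_dom_of_computablePred_half h)⟩
end

section
/- There exists a computably enumerable set A ⊆ ℕ whose complement ℕ \ A is infinite, hyperimmune, and not hyperhyperimmune. -/
/-- The canonical finite set with index `n` (canonical bijective coding of finite sets). -/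
def Dfin (n : ℕ) : Finset ℕ := Denumerable.ofNat (Finset ℕ) n

/-- A set is hyperimmune if it is infinite and there is no computable `f` producing
pairwise disjoint canonical finite sets each meeting the set. -/
def Hyperimmune (B : Set ℕ) : Prop :=
  B.Infinite ∧ ¬ ∃ f : ℕ → ℕ, Computable f ∧
    (∀ m n, m ≠ n → Disjoint (Dfin (f m)) (Dfin (f n))) ∧
    ∀ n, ∃ x ∈ Dfin (f n), x ∈ B

/-- The c.e. set with index `n` in the standard numbering. -/
def Wset (n : ℕ) : Set ℕ := {x | ((Denumerable.ofNat Nat.Partrec.Code n).eval x).Dom}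

/-- A set is hyperhyperimmune if it is infinite and there is no computable `f` producing
pairwise disjoint finite c.e. sets each meeting the set. -/
def HyperHyperimmune (B : Set ℕ) : Prop :=
  B.Infinite ∧ ¬ ∃ f : ℕ → ℕ, Computable f ∧
    (∀ m n, m ≠ n → Disjoint (Wset (f m)) (Wset (f n))) ∧
    (∀ n, (Wset (f n)).Finite) ∧
    ∀ n, ∃ x ∈ Wset (f n), x ∈ B


/-! Dekker's deficiency set. Let `a` be a primitive recursive injective enumeration of a
noncomputable set (here the halting set, doubled and padded with odd numbers) and
`A = {s | ∃ m > s, a m < a s}`; then `Aᶜ` is the set of true stages `s`, after which `a` never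
again takes a value below `a s`.

If a computable disjoint array of canonical finite sets met every true stage, the first `y + 1`
of them would yield a computable bound beyond some true stage `s` with `y ≤ a s`, and `y` is
enumerated at all only before `s`: the range of `a` would be decidable.

The number of stages `r < s` that still look true at stage `s` is computable in `s`; it equals
the number of true stages below `s` when `s` is true and is never smaller. Its fibres are
therefore disjoint finite sets with computable c.e. indices, the `n`-th containing the `n`-th
true stage. -/

open Nat.Partrec Nat.Partrec.Code Encodable Denumerable Function

theorem PrimrecRel.primrec₂_count {R : ℕ → ℕ → Prop} [DecidableRel R] (hR : PrimrecRel R) :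
    Primrec₂ fun n y => Nat.count (R · y) n :=
  (Primrec.list_length.comp (hR.listFilter.comp (Primrec.list_range.comp .fst) .snd)).of_eq
    fun _ => by simp [Nat.count, List.countP_eq_length_filter]

theorem Computable.sum_range {f : ℕ → ℕ} (hf : Computable f) :
    Computable fun n => ∑ i ∈ Finset.range n, f i :=
  (Computable.nat_rec .id (.const 0)
    (Primrec.nat_add.to_comp.comp (Computable.snd.comp .snd)
      (hf.comp (Computable.fst.comp .snd))).to₂).of_eq
    fun n => by induction n with
      | zero => rfl
      | succ n ih => simp [Finset.sum_range_succ, ← ih]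

theorem ce_setOf_exists {p : ℕ → ℕ → Prop} (hp : ComputablePred fun q : ℕ × ℕ => p q.1 q.2) :
    CE {n | ∃ m, p n m} := by
  classical
  refine ⟨fun n => Nat.rfind ((fun m => decide (p n m)) : ℕ →. Bool),
    Partrec.rfind hp.decide.partrec, ?_⟩
  intro n
  refine Iff.trans ?_ Nat.rfind_dom.symm
  simp

theorem exists_computable_Wset_eq {p : ℕ → ℕ → Prop}
    (hp : ComputablePred fun q : ℕ × ℕ => p q.1 q.2) :
    ∃ f : ℕ → ℕ, Computable f ∧ ∀ n, Wset (f n) = {x | p n x} := by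
  classical
  have hg : Partrec₂ fun n x => cond (decide (p n x)) (Part.some 0) Part.none :=
    Partrec.cond hp.decide (Partrec.const' _) Partrec.none
  obtain ⟨c, hc⟩ := exists_code.1 (Partrec₂.unpaired'.2 hg)
  refine ⟨fun n => encode (curry c n),
    (Primrec.encode.comp (primrec₂_curry.comp (.const c) .id)).to_comp, fun n => ?_⟩
  ext x
  simp only [Wset, ofNat_encode, eval_curry, hc, Set.mem_ofPred_eq, Nat.unpaired, Nat.unpair_pair]
  cases h : decide (p n x) <;> simp_all

theorem le_encode_add_of_mem_raise' : ∀ {l : List ℕ} {n x : ℕ}, x ∈ raise' l n → x ≤ encode l + n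
  | [], _, _, h => by simp [raise'] at h
  | m :: l, n, x, h => by
    have := Nat.add_le_pair m (encode l)
    simp only [encode_list_cons, encode_nat]
    rcases List.mem_cons.1 h with rfl | h
    · omega
    · have := le_encode_add_of_mem_raise' h
      omega

theorem le_of_mem_Dfin {m x : ℕ} (h : x ∈ Dfin m) : x ≤ m := by
  change x ∈ Finset.map _ (raise'Finset (ofNat (List ℕ) m) 0) at h
  obtain ⟨y, hy, rfl⟩ := Finset.mem_map.1 h
  change y ≤ m
  simpa using le_encode_add_of_mem_raise' hy

def deficiencySet (a : ℕ → ℕ) : Set ℕ := {s | ∃ m, s < m ∧ a m < a s}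

def IsTrueStage (a : ℕ → ℕ) (s : ℕ) : Prop := ∀ m, s < m → a s < a m

def stageRank (a : ℕ → ℕ) (s : ℕ) : ℕ := Nat.count (fun r => ∀ m ∈ Finset.Ioc r s, a r < a m) s

section Deficiency

variable {a : ℕ → ℕ}

theorem mem_compl_deficiencySet (ha : Injective a) {s : ℕ} :
    s ∈ (deficiencySet a)ᶜ ↔ IsTrueStage a s := by
  simp only [deficiencySet, Set.mem_compl_iff, Set.mem_ofPred_eq, not_exists, not_and, not_lt]
  exact forall₂_congr fun m hsm => ⟨fun h => h.lt_of_ne (ha.ne hsm.ne), le_of_lt⟩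

theorem exists_isTrueStage_ge (ha : Injective a) (l : ℕ) : ∃ s, l ≤ s ∧ IsTrueStage a s := by
  classical
  have hex : ∃ v, ∃ m, l ≤ m ∧ a m = v := ⟨a l, l, le_rfl, rfl⟩
  obtain ⟨s, hls, hs⟩ := Nat.find_spec hex
  refine ⟨s, hls, fun m hsm => ?_⟩
  have hle : a s ≤ a m := hs ▸ Nat.find_min' hex ⟨m, by omega, rfl⟩
  exact hle.lt_of_ne (ha.ne hsm.ne)

theorem infinite_setOf_isTrueStage (ha : Injective a) : {s | IsTrueStage a s}.Infinite :=
  Set.infinite_of_forall_exists_gt fun l =>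
    let ⟨s, hls, hs⟩ := exists_isTrueStage_ge ha (l + 1)
    ⟨s, hs, hls⟩

theorem ce_deficiencySet (ha : Computable a) : CE (deficiencySet a) :=
  ce_setOf_exists <| Computable.computablePred <|
    (Primrec.and.to_comp.comp (Primrec.nat_lt.decide.to_comp.comp .fst .snd)
      (Primrec.nat_lt.decide.to_comp.comp (ha.comp .snd) (ha.comp .fst))).of_eq
      fun _ => by simp

theorem primrec_stageRank (ha : Primrec a) : Primrec (stageRank a) := by
  have hR : PrimrecRel fun (m : ℕ) (q : ℕ × ℕ) => ¬ q.1 < m ∨ a q.1 < a m :=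
    (Primrec.nat_lt.comp (Primrec.fst.comp .snd) .fst).not.or
      (Primrec.nat_lt.comp (ha.comp (Primrec.fst.comp .snd)) (ha.comp .fst))
  have hbounded :
      PrimrecPred fun q : ℕ × ℕ => ∀ m ∈ List.range (q.2 + 1), ¬ q.1 < m ∨ a q.1 < a m :=
    hR.forall_mem_list.comp (Primrec.list_range.comp (Primrec.succ.comp .snd)) .id
  have hlook : PrimrecRel fun r s => ∀ m ∈ Finset.Ioc r s, a r < a m :=
    hbounded.of_eq fun q => by
      simp only [Finset.mem_Ioc, List.mem_range, Nat.lt_succ_iff, ← imp_iff_not_or, and_imp]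
      exact forall_congr' fun m => ⟨fun h hm hlt => h hlt hm, fun h hm hlt => h hlt hm⟩
  classical
  exact (hlook.primrec₂_count.comp .id .id).of_eq fun s => by simp [stageRank]

theorem isTrueStage_iff_of_lt {r s : ℕ} (hs : IsTrueStage a s) (hrs : r < s) :
    IsTrueStage a r ↔ ∀ m ∈ Finset.Ioc r s, a r < a m := by
  refine ⟨fun h m hm => h m (Finset.mem_Ioc.1 hm).1, fun h m hrm => ?_⟩
  rcases le_or_gt m s with hms | hsm
  · exact h m (Finset.mem_Ioc.2 ⟨hrm, hms⟩)
  · exact (h s (Finset.mem_Ioc.2 ⟨hrs, le_rfl⟩)).trans (hs m hsm)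

theorem count_isTrueStage_le_stageRank [DecidablePred (IsTrueStage a)] (s : ℕ) :
    Nat.count (IsTrueStage a) s ≤ stageRank a s :=
  Nat.count_mono_left fun _ _ hr m hm => hr m (Finset.mem_Ioc.1 hm).1

theorem stageRank_eq_count [DecidablePred (IsTrueStage a)] {s : ℕ} (hs : IsTrueStage a s) :
    stageRank a s = Nat.count (IsTrueStage a) s :=
  le_antisymm (Nat.count_mono_left fun _ hrs hr => (isTrueStage_iff_of_lt hs hrs).2 hr)
    (count_isTrueStage_le_stageRank s)

theorem stageRank_nth_isTrueStage (ha : Injective a) (n : ℕ) :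
    stageRank a (Nat.nth (IsTrueStage a) n) = n := by
  classical
  rw [stageRank_eq_count (Nat.nth_mem_of_infinite (infinite_setOf_isTrueStage ha) n),
    Nat.count_nth_of_infinite (infinite_setOf_isTrueStage ha)]

theorem le_nth_isTrueStage_of_stageRank_le (ha : Injective a) {s n : ℕ} (h : stageRank a s ≤ n) :
    s ≤ Nat.nth (IsTrueStage a) n := by
  classical
  exact (Nat.count_le_iff_le_nth (infinite_setOf_isTrueStage ha)).1
    ((count_isTrueStage_le_stageRank s).trans h)

theorem not_hyperHyperimmune_compl_deficiencySet (ha : Primrec a) (hinj : Injective a) :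
    ¬ HyperHyperimmune (deficiencySet a)ᶜ := by
  rintro ⟨-, h⟩
  obtain ⟨f, hf, hW⟩ := exists_computable_Wset_eq (p := fun n s => stageRank a s = n)
    (Primrec.eq.comp ((primrec_stageRank ha).comp .snd) .fst).computablePred
  refine h ⟨f, hf, fun m n hmn => ?_, fun n => ?_, fun n => ⟨Nat.nth (IsTrueStage a) n, ?_, ?_⟩⟩
  · rw [hW, hW]
    exact Set.disjoint_left.2 fun s hm hn => hmn (hm.symm.trans hn)
  · rw [hW]
    exact (Set.finite_Iic _).subset fun s hs => le_nth_isTrueStage_of_stageRank_le hinj hs.le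
  · rw [hW]
    exact stageRank_nth_isTrueStage hinj n
  · exact (mem_compl_deficiencySet hinj).2
      (Nat.nth_mem_of_infinite (infinite_setOf_isTrueStage hinj) n)

theorem mem_range_iff_exists_lt_of_isTrueStage {s y b : ℕ} (hs : IsTrueStage a s) (hy : y ≤ a s)
    (hsb : s < b) : y ∈ Set.range a ↔ ∃ m < b, a m = y := by
  refine ⟨fun ⟨m, hm⟩ => ⟨m, ?_, hm⟩, fun ⟨m, _, hm⟩ => ⟨m, hm⟩⟩
  by_contra! hbm
  have := hs m (by omega)
  omega

theorem exists_le_apply_of_injective {g : ℕ → ℕ} (hg : Injective g) (y : ℕ) :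
    ∃ i ≤ y, y ≤ g i := by
  by_contra! h
  have := Finset.card_le_card_of_injOn g (s := Finset.range (y + 1)) (t := Finset.range y)
    (fun i hi => by simpa using h i (by simpa [Nat.lt_succ_iff] using hi)) hg.injOn
  simp at this

theorem hyperimmune_compl_deficiencySet (ha : Primrec a) (hinj : Injective a)
    (hrange : ¬ ComputablePred (· ∈ Set.range a)) : Hyperimmune (deficiencySet a)ᶜ := by
  refine ⟨(infinite_setOf_isTrueStage hinj).mono fun s => (mem_compl_deficiencySet hinj).2, ?_⟩
  rintro ⟨f, hf, hdisj, hmeet⟩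
  choose x hxD hxT using hmeet
  have hx : Injective x := fun m n hmn => by_contra fun hne =>
    Finset.disjoint_left.1 (hdisj m n hne) (hxD m) (hmn ▸ hxD n)
  let bound y := ∑ i ∈ Finset.range (y + 1), f i
  have hbound : ∀ y, ∃ s, IsTrueStage a s ∧ s < bound y + 1 ∧ y ≤ a s := fun y => by
    obtain ⟨i, hiy, hyi⟩ := exists_le_apply_of_injective (hinj.comp hx) y
    refine ⟨x i, (mem_compl_deficiencySet hinj).1 (hxT i), Nat.lt_succ_of_le ?_, hyi⟩
    exact (le_of_mem_Dfin (hxD i)).trans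
      (Finset.single_le_sum (fun _ _ => Nat.zero_le _) (by simpa [Nat.lt_succ_iff]))
  have hsearch : PrimrecRel fun n y => ∃ m < n, a m = y :=
    PrimrecRel.exists_lt (R := fun m y => a m = y) (Primrec.eq.comp (ha.comp .fst) .snd)
  classical
  refine hrange ((hsearch.decide.to_comp.comp
    (Computable.succ.comp ((Computable.sum_range hf).comp .succ)) .id).computablePred.of_eq
    fun y => ?_)
  obtain ⟨s, hs, hsb, hys⟩ := hbound y
  exact (mem_range_iff_exists_lt_of_isTrueStage hs hys hsb).symm

end Deficiency

def haltsExactlyAt (c : Code) (s : ℕ) : Bool :=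
  (evaln (s + 1) c 0).isSome && !(evaln s c 0).isSome

theorem primrec₂_haltsExactlyAt : Primrec₂ haltsExactlyAt :=
  Primrec.and.comp
    (Primrec.option_isSome.comp
      (primrec_evaln.comp (((Primrec.succ.comp .snd).pair .fst).pair (.const 0))))
    (Primrec.not.comp (Primrec.option_isSome.comp
      (primrec_evaln.comp ((Primrec.snd.pair .fst).pair (.const 0)))))

theorem evaln_isSome_mono {c : Code} {k k' n : ℕ} (hkk' : k ≤ k') (h : (evaln k c n).isSome) :
    (evaln k' c n).isSome :=
  let ⟨_, hx⟩ := Option.isSome_iff_exists.1 h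
  Option.isSome_iff_exists.2 ⟨_, evaln_mono hkk' hx⟩

theorem haltsExactlyAt_injective {c : Code} {s s' : ℕ} (h : haltsExactlyAt c s)
    (h' : haltsExactlyAt c s') : s = s' := by
  simp only [haltsExactlyAt, Bool.and_eq_true, Bool.not_eq_true'] at h h'
  by_contra hne
  rcases Nat.lt_or_gt_of_ne hne with hlt | hlt
  · simpa [h'.2] using evaln_isSome_mono hlt h.1
  · simpa [h.2] using evaln_isSome_mono hlt h'.1

theorem exists_haltsExactlyAt_iff {c : Code} : (∃ s, haltsExactlyAt c s) ↔ (eval c 0).Dom := by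
  constructor
  · rintro ⟨s, hs⟩
    obtain ⟨x, hx⟩ := Option.isSome_iff_exists.1 (Bool.and_eq_true _ _ ▸ hs).1
    exact Part.dom_iff_mem.2 ⟨x, evaln_sound hx⟩
  · intro h
    obtain ⟨x, hx⟩ := Part.dom_iff_mem.1 h
    obtain ⟨k, hk⟩ := evaln_complete.1 hx
    have hex : ∃ k, (evaln k c 0).isSome := ⟨k, Option.isSome_iff_exists.2 ⟨x, hk⟩⟩
    classical
    obtain ⟨s, hs⟩ : ∃ s, Nat.find hex = s + 1 := Nat.exists_eq_succ_of_ne_zero fun h0 => by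
      simpa [h0, evaln] using Nat.find_spec hex
    refine ⟨s, ?_⟩
    simp only [haltsExactlyAt, Bool.and_eq_true, Bool.not_eq_true']
    exact ⟨hs ▸ Nat.find_spec hex, by simpa using Nat.find_min hex (by omega : s < Nat.find hex)⟩

/-- Odd values pad the stages at which nothing halts, so that the enumeration is total and
injective while its even values are the `2 * e` with `eval (ofNat Code e) 0` defined. -/
def haltingEnum (k : ℕ) : ℕ :=
  if haltsExactlyAt (ofNat Code k.unpair.1) k.unpair.2 then 2 * k.unpair.1 else 2 * k + 1

theorem primrec_haltingEnum : Primrec haltingEnum :=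
  Primrec.ite
    (Primrec.eq.comp (primrec₂_haltsExactlyAt.comp
      ((Primrec.ofNat Code).comp (Primrec.fst.comp .unpair)) (Primrec.snd.comp .unpair))
      (.const true))
    (Primrec.nat_double.comp (Primrec.fst.comp .unpair)) Primrec.nat_double_succ

theorem haltingEnum_injective : Injective haltingEnum := by
  intro k k' h
  simp only [haltingEnum] at h
  split_ifs at h with hk hk'
  · have he : k.unpair.1 = k'.unpair.1 := by omega
    rw [he] at hk
    rw [← Nat.pair_unpair k, ← Nat.pair_unpair k', he, haltsExactlyAt_injective hk hk']
  all_goals omega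

theorem two_mul_mem_range_haltingEnum {e : ℕ} :
    2 * e ∈ Set.range haltingEnum ↔ (eval (ofNat Code e) 0).Dom := by
  rw [← exists_haltsExactlyAt_iff]
  constructor
  · rintro ⟨k, hk⟩
    simp only [haltingEnum] at hk
    split_ifs at hk with h
    · exact ⟨k.unpair.2, by rwa [show e = k.unpair.1 by omega]⟩
    · omega
  · rintro ⟨s, hs⟩
    exact ⟨Nat.pair e s, by simp [haltingEnum, hs]⟩

theorem not_computablePred_mem_range_haltingEnum :
    ¬ ComputablePred (· ∈ Set.range haltingEnum) := by
  rintro ⟨_, h⟩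
  refine ComputablePred.halting_problem 0
    ((h.comp (Primrec.nat_double.to_comp.comp Computable.encode)).computablePred.of_eq fun c => ?_)
  simpa using two_mul_mem_range_haltingEnum (e := encode c)

theorem stmt18 : ∃ A : Set ℕ, CE A ∧ (Aᶜ).Infinite ∧ Hyperimmune Aᶜ ∧ ¬ HyperHyperimmune Aᶜ := by
  have hhyp := hyperimmune_compl_deficiencySet primrec_haltingEnum haltingEnum_injective
    not_computablePred_mem_range_haltingEnum
  exact ⟨deficiencySet haltingEnum, ce_deficiencySet primrec_haltingEnum.to_comp, hhyp.1, hhyp,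
    not_hyperHyperimmune_compl_deficiencySet primrec_haltingEnum haltingEnum_injective⟩
end
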